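/- Let A, B, C, D, E, F be real numbers and x, y > 0 be real. The 8×8 real symmetric matrix Γ(A,B,C,D,E,F) − D₄(x,y) is positive semidefinite if and only if all of the following hold: A − x/2 ≥ 0, C − y/2 ≥ 0, (A − x/2)(C − y/2) − E² ≥ 0, B − 1/(2x) ≥ 0, D − 1/(2y) ≥ 0, and (B − 1/(2x))(D − 1/(2y)) − F² ≥ 0. -/

import Mathlib

open Matrix

/-- The generalized Werner–Wolf covariance matrix `Γ(A,B,C,D,E,F)`. -/
def wwCM (A B C D E F : ℝ) : Matrix (Fin 8) (Fin 8) ℝ :=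
  !![A, 0, 0, 0, E, 0, 0, 0;
     0, B, 0, 0, 0, 0, 0, -F;
     0, 0, A, 0, 0, 0, -E, 0;
     0, 0, 0, B, 0, -F, 0, 0;
     E, 0, 0, 0, C, 0, 0, 0;
     0, 0, 0, -F, 0, D, 0, 0;
     0, 0, -E, 0, 0, 0, C, 0;
     0, -F, 0, 0, 0, 0, 0, D]

/-- The covariance matrix `(1/2)·diag(x,1/x,x,1/x,y,1/y,y,1/y)` of a product of
four squeezed vacuum states. -/
noncomputable def sqCM4 (x y : ℝ) : Matrix (Fin 8) (Fin 8) ℝ :=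
  !![x / 2, 0, 0, 0, 0, 0, 0, 0;
     0, 1 / (2 * x), 0, 0, 0, 0, 0, 0;
     0, 0, x / 2, 0, 0, 0, 0, 0;
     0, 0, 0, 1 / (2 * x), 0, 0, 0, 0;
     0, 0, 0, 0, y / 2, 0, 0, 0;
     0, 0, 0, 0, 0, 1 / (2 * y), 0, 0;
     0, 0, 0, 0, 0, 0, y / 2, 0;
     0, 0, 0, 0, 0, 0, 0, 1 / (2 * y)]

section Aux

variable {α : Type*} (a b c d e f g h : α)

lemma v8_0 : ![a,b,c,d,e,f,g,h] (0:Fin 8) = a := rfl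
lemma v8_1 : ![a,b,c,d,e,f,g,h] (1:Fin 8) = b := rfl
lemma v8_2 : ![a,b,c,d,e,f,g,h] (2:Fin 8) = c := rfl
lemma v8_3 : ![a,b,c,d,e,f,g,h] (3:Fin 8) = d := rfl
lemma v8_4 : ![a,b,c,d,e,f,g,h] (4:Fin 8) = e := rfl
lemma v8_5 : ![a,b,c,d,e,f,g,h] (5:Fin 8) = f := rfl
lemma v8_6 : ![a,b,c,d,e,f,g,h] (6:Fin 8) = g := rfl
lemma v8_7 : ![a,b,c,d,e,f,g,h] (7:Fin 8) = h := rfl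

lemma v8m_0 (hk : 0 < 8) : ![a,b,c,d,e,f,g,h] ⟨0,hk⟩ = a := rfl
lemma v8m_1 (hk : 1 < 8) : ![a,b,c,d,e,f,g,h] ⟨1,hk⟩ = b := rfl
lemma v8m_2 (hk : 2 < 8) : ![a,b,c,d,e,f,g,h] ⟨2,hk⟩ = c := rfl
lemma v8m_3 (hk : 3 < 8) : ![a,b,c,d,e,f,g,h] ⟨3,hk⟩ = d := rfl
lemma v8m_4 (hk : 4 < 8) : ![a,b,c,d,e,f,g,h] ⟨4,hk⟩ = e := rfl
lemma v8m_5 (hk : 5 < 8) : ![a,b,c,d,e,f,g,h] ⟨5,hk⟩ = f := rfl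
lemma v8m_6 (hk : 6 < 8) : ![a,b,c,d,e,f,g,h] ⟨6,hk⟩ = g := rfl
lemma v8m_7 (hk : 7 < 8) : ![a,b,c,d,e,f,g,h] ⟨7,hk⟩ = h := rfl

end Aux

/-- Explicit form of the difference matrix. -/
lemma ww_sub_eq (A B C D E F x y : ℝ) :
    wwCM A B C D E F - sqCM4 x y =
    !![A - x/2, 0, 0, 0, E, 0, 0, 0;
       0, B - 1/(2*x), 0, 0, 0, 0, 0, -F;
       0, 0, A - x/2, 0, 0, 0, -E, 0;
       0, 0, 0, B - 1/(2*x), 0, -F, 0, 0;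
       E, 0, 0, 0, C - y/2, 0, 0, 0;
       0, 0, 0, -F, 0, D - 1/(2*y), 0, 0;
       0, 0, -E, 0, 0, 0, C - y/2, 0;
       0, -F, 0, 0, 0, 0, 0, D - 1/(2*y)] := by
  ext i j
  fin_cases i <;> fin_cases j <;>
    simp only [wwCM, sqCM4, Matrix.sub_apply, Matrix.of_apply, v8m_0, v8m_1, v8m_2, v8m_3,
      v8m_4, v8m_5, v8m_6, v8m_7, sub_zero, zero_sub, sub_self, neg_zero]

/-- The quadratic form of the difference matrix. -/
lemma ww_form (A B C D E F x y : ℝ) (v : Fin 8 → ℝ) :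
    v ⬝ᵥ ((wwCM A B C D E F - sqCM4 x y) *ᵥ v) =
    ((A - x/2)*(v 0)^2 + 2*E*(v 0)*(v 4) + (C - y/2)*(v 4)^2) +
    ((A - x/2)*(v 2)^2 - 2*E*(v 2)*(v 6) + (C - y/2)*(v 6)^2) +
    ((B - 1/(2*x))*(v 1)^2 - 2*F*(v 1)*(v 7) + (D - 1/(2*y))*(v 7)^2) +
    ((B - 1/(2*x))*(v 3)^2 - 2*F*(v 3)*(v 5) + (D - 1/(2*y))*(v 5)^2) := by
  rw [ww_sub_eq]
  have hv : v = ![v 0, v 1, v 2, v 3, v 4, v 5, v 6, v 7] := by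
    funext i; fin_cases i <;> rfl
  rw [hv]
  simp [Matrix.cons_mulVec, Matrix.cons_dotProduct, Matrix.vecHead, Matrix.vecTail,
    v8_5, v8_6, v8_7]
  ring

lemma quad_nonneg {a c e : ℝ} (ha : 0 ≤ a) (hc : 0 ≤ c) (h : 0 ≤ a*c - e^2) (u w : ℝ) :
    0 ≤ a*u^2 + 2*e*u*w + c*w^2 := by
  rcases eq_or_lt_of_le ha with h0 | h0
  · have ha0 : a = 0 := h0.symm
    have he : e = 0 := by nlinarith [sq_nonneg e]
    rw [ha0, he]
    have := mul_nonneg hc (sq_nonneg w)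
    nlinarith [this]
  · nlinarith [sq_nonneg (a*u + e*w), mul_nonneg h (sq_nonneg w)]

lemma quad_key {a c e : ℝ} (h : ∀ t s : ℝ, 0 ≤ a*t^2 + 2*e*t*s + c*s^2) :
    0 ≤ a ∧ 0 ≤ c ∧ 0 ≤ a*c - e^2 := by
  have ha : 0 ≤ a := by nlinarith [h 1 0]
  have hc : 0 ≤ c := by nlinarith [h 0 1]
  refine ⟨ha, hc, ?_⟩
  rcases eq_or_lt_of_le ha with h0 | h0
  · have ha0 : a = 0 := h0.symm
    by_cases he : e = 0
    · rw [ha0, he]; nlinarith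
    · exfalso
      have h3 := h (-(c+1)/(2*e)) 1
      have h4 : 2*e*(-(c+1)/(2*e)) = -(c+1) := by field_simp
      rw [ha0] at h3
      nlinarith [h3, h4]
  · nlinarith [h e (-a)]

theorem wwCM_sub_sqCM4_posSemidef_iff
    (A B C D E F x y : ℝ) (hx : 0 < x) (hy : 0 < y) :
    (wwCM A B C D E F - sqCM4 x y).PosSemidef ↔
      (A - x / 2 ≥ 0 ∧ C - y / 2 ≥ 0 ∧
       (A - x / 2) * (C - y / 2) - E ^ 2 ≥ 0 ∧
       B - 1 / (2 * x) ≥ 0 ∧ D - 1 / (2 * y) ≥ 0 ∧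
       (B - 1 / (2 * x)) * (D - 1 / (2 * y)) - F ^ 2 ≥ 0) := by
  constructor
  · intro h
    have h1 : ∀ t s : ℝ, 0 ≤ (A - x/2)*t^2 + 2*E*t*s + (C - y/2)*s^2 := by
      intro t s
      have h5 := h.dotProduct_mulVec_nonneg ![t,0,0,0,s,0,0,0]
      have hst : (star ![t,0,0,0,s,0,0,0] : Fin 8 → ℝ) = ![t,0,0,0,s,0,0,0] := by
        funext i; exact star_trivial _
      rw [hst, ww_form] at h5
      simp only [v8_0, v8_1, v8_2, v8_3, v8_4, v8_5, v8_6, v8_7] at h5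
      nlinarith [h5]
    have h2 : ∀ t s : ℝ, 0 ≤ (B - 1/(2*x))*t^2 + 2*(-F)*t*s + (D - 1/(2*y))*s^2 := by
      intro t s
      have h5 := h.dotProduct_mulVec_nonneg ![0,t,0,0,0,0,0,s]
      have hst : (star ![0,t,0,0,0,0,0,s] : Fin 8 → ℝ) = ![0,t,0,0,0,0,0,s] := by
        funext i; exact star_trivial _
      rw [hst, ww_form] at h5
      simp only [v8_0, v8_1, v8_2, v8_3, v8_4, v8_5, v8_6, v8_7] at h5
      nlinarith [h5]
    obtain ⟨ha, hc, hE⟩ := quad_key h1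
    obtain ⟨hb, hd, hF⟩ := quad_key h2
    rw [neg_sq] at hF
    exact ⟨ha, hc, hE, hb, hd, hF⟩
  · rintro ⟨ha, hc, hE, hb, hd, hF⟩
    refine Matrix.PosSemidef.of_dotProduct_mulVec_nonneg ?_ ?_
    · rw [Matrix.IsHermitian, ww_sub_eq]
      ext i j
      fin_cases i <;> fin_cases j <;>
        simp only [Matrix.conjTranspose_apply, Matrix.of_apply, v8m_0, v8m_1, v8m_2, v8m_3,
          v8m_4, v8m_5, v8m_6, v8m_7, star_trivial]
    · intro v
      have hsv : (star v : Fin 8 → ℝ) = v := by funext i; exact star_trivial _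
      rw [hsv, ww_form]
      have hE' : 0 ≤ (A - x/2)*(C - y/2) - (-E)^2 := by rw [neg_sq]; exact hE
      have hF' : 0 ≤ (B - 1/(2*x))*(D - 1/(2*y)) - (-F)^2 := by rw [neg_sq]; exact hF
      have t1 := quad_nonneg ha hc hE (v 0) (v 4)
      have t2 := quad_nonneg ha hc hE' (v 2) (v 6)
      have t3 := quad_nonneg hb hd hF' (v 1) (v 7)
      have t4 := quad_nonneg hb hd hF' (v 3) (v 5)
      ring_nf at t1 t2 t3 t4 ⊢
      linarith [t1, t2, t3, t4]
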